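/- If a vertex of the tree is 'eventually unsupported' in the sequence of weight functions obtained by iterated renormalization (i.e. at some stage all its descendants at some depth have weight zero), then the sequence of its weights converges to 0. -/

import Mathlib

/-- An abstract rooted tree: every vertex has a parent (the root is its own
parent), a depth (distance to the root), every vertex is connected to the
root, and each depth level is finite (finitely-branching). -/
structure RTree (V : Type) where
  root : V
  parent : V → V
  depth : V → ℕ
  parent_root : parent root = root
  depth_root : depth root = 0
  depth_parent : ∀ v : V, v ≠ root → depth (parent v) + 1 = depth v
  ancestor_root : ∀ v : V, parent^[depth v] v = root
  level_finite : ∀ d : ℕ, {v : V | depth v = d}.Finite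

namespace RTree

variable {V : Type}

/-- The children of a vertex. -/
def children (T : RTree V) (v : V) : Set V :=
  {u : V | T.parent u = v ∧ u ≠ T.root}

/-- The descendants of `v` that lie `e` levels below `v`. -/
def descAt (T : RTree V) (e : ℕ) (v : V) : Set V :=
  {u : V | T.parent^[e] u = v ∧ T.depth u = T.depth v + e}

end RTree

/-- A coherent weight function (a Hintikka tree): the root gets weight 1 and
the weight of each vertex is the sum of the weights of its children. -/
def Coherent {V : Type} (T : RTree V) (h : V → ℝ) : Prop :=
  h T.root = 1 ∧ ∀ v : V, h v = ∑ᶠ u ∈ T.children v, h u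

/-!
Coherence propagates down the tree: the weight of a vertex is the sum of the weights of its
descendants at any fixed distance below it. Hence `H E v = 0`, and since renormalization keeps
zero weights at zero, `H n v = 0` for every `n ≥ E`.
-/

namespace RTree

variable {V : Type} (T : RTree V)

lemma descAt_finite (e : ℕ) (v : V) : (T.descAt e v).Finite :=
  (T.level_finite (T.depth v + e)).subset fun _ hu => hu.2

lemma children_finite (v : V) : (T.children v).Finite :=
  (T.level_finite (T.depth v + 1)).subset fun u hu => by
    rw [Set.mem_ofPred_eq, ← T.depth_parent u hu.2, hu.1]

lemma pairwiseDisjoint_children (s : Set V) : s.PairwiseDisjoint T.children := by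
  intro a _ b _ hab
  rw [Function.onFun, Set.disjoint_left]
  rintro w ⟨rfl, -⟩ ⟨rfl, -⟩
  exact hab rfl

lemma descAt_zero (v : V) : T.descAt 0 v = {v} := by
  ext u
  simp only [descAt, Function.iterate_zero, id_eq, add_zero, Set.mem_singleton_iff]
  exact ⟨And.left, fun hu => ⟨hu, hu ▸ rfl⟩⟩

lemma descAt_succ (e : ℕ) (v : V) :
    T.descAt (e + 1) v = ⋃ u ∈ T.descAt e v, T.children u := by
  ext w
  simp only [Set.mem_iUnion, exists_prop]
  constructor
  · rintro ⟨hp, hd⟩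
    have hw : w ≠ T.root := by
      rintro rfl
      rw [T.depth_root] at hd
      omega
    have hdp := T.depth_parent w hw
    exact ⟨T.parent w, ⟨by rwa [← Function.iterate_succ_apply], by omega⟩, rfl, hw⟩
  · rintro ⟨u, ⟨hp, hd⟩, rfl, hw⟩
    refine ⟨by rwa [Function.iterate_succ_apply], ?_⟩
    rw [← T.depth_parent w hw, hd, add_assoc]

lemma eq_finsum_descAt {M : Type*} [AddCommMonoid M] {h : V → M}
    (hsum : ∀ v, h v = ∑ᶠ u ∈ T.children v, h u) (v : V) (e : ℕ) :
    h v = ∑ᶠ u ∈ T.descAt e v, h u := by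
  induction e with
  | zero => rw [descAt_zero, finsum_mem_singleton]
  | succ e ih =>
    rw [descAt_succ, finsum_mem_biUnion (T.pairwiseDisjoint_children _) (T.descAt_finite e v)
      fun u _ => T.children_finite u, ih]
    exact finsum_mem_congr rfl fun u _ => hsum u

lemma eq_zero_of_descAt_eq_zero {M : Type*} [AddCommMonoid M] {h : V → M}
    (hsum : ∀ v, h v = ∑ᶠ u ∈ T.children v, h u) {v : V} {e : ℕ}
    (hzero : ∀ u ∈ T.descAt e v, h u = 0) : h v = 0 := by
  rw [T.eq_finsum_descAt hsum v e]
  exact finsum_mem_of_eqOn_zero hzero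

end RTree

lemma eventually_eq_zero_of_zero_persists {M : Type*} [Zero M] {f : ℕ → M}
    (hf : ∀ n, f n = 0 → f (n + 1) = 0) {E : ℕ} (hE : f E = 0) :
    ∀ᶠ n in Filter.atTop, f n = 0 := by
  filter_upwards [Filter.eventually_ge_atTop E] with n hn
  induction n, hn using Nat.le_induction with
  | base => exact hE
  | succ n _ ih => exact hf n ih

theorem stmt7_general {V : Type} (T : RTree V) (H : ℕ → V → ℝ)
    (hcoh : ∀ n : ℕ, Coherent T (H n))
    (hzero : ∀ (n : ℕ) (v : V), H n v = 0 → H (n + 1) v = 0)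
    (v : V) (E e : ℕ) (hev : ∀ u ∈ T.descAt e v, H E u = 0) :
    Filter.Tendsto (fun n : ℕ => H n v) Filter.atTop (nhds 0) := by
  have hE : H E v = 0 := T.eq_zero_of_descAt_eq_zero (hcoh E).2 hev
  exact tendsto_const_nhds.congr'
    ((eventually_eq_zero_of_zero_persists (fun n => hzero n v) hE).mono fun _ h => h.symm)

/-- If a vertex is eventually unsupported in the sequence of weight functions
obtained by iterated renormalization (at some stage `E` all of its descendants
at some depth have weight zero), then the sequence of its weights converges
to 0.  (We use that renormalization never raises a zero weight to positive.) -/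
theorem stmt7 {V : Type} (T : RTree V) (H : ℕ → V → ℝ)
    (hcoh : ∀ n : ℕ, Coherent T (H n)) (hnn : ∀ (n : ℕ) (v : V), 0 ≤ H n v)
    (hzero : ∀ (n : ℕ) (v : V), H n v = 0 → H (n + 1) v = 0)
    (v : V) (E e : ℕ) (hev : ∀ u ∈ T.descAt e v, H E u = 0) :
    Filter.Tendsto (fun n : ℕ => H n v) Filter.atTop (nhds 0) :=
  stmt7_general T H hcoh hzero v E e hev
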